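/- arXiv:1310.2902 — 4 statements merged into one kernel-verified Lean document; each statement's English description precedes it below -/
import Mathlib

section
/- Every global mild solution u with initial datum φ ∈ W satisfies, for all t ≥ 0, the energy equality 𝓔(u(t),u̇(t)) + k ∫₀ᵗ ‖u̇(s)‖² ds = 𝓔(φ(0),φ'(0)) − ∫₀ᵗ ⟨F*(u(s)), u̇(s)⟩ ds − ∫₀ᵗ ⟨M(u_s), u̇(s)⟩ ds. -/
open Set Real MeasureTheory
open scoped RealInnerProductSpace

noncomputable section

/-- Euclidean space `ℝⁿ`. -/
abbrev Euc (n : ℕ) := EuclideanSpace ℝ (Fin n)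

/-- `(φ, φ')` is a `C¹` pair on `[-h,0]`: `φ'` is the (one-sided) derivative of `φ` on
`[-h,0]` and is continuous there. -/
def IsC1Pair (n : ℕ) (h : ℝ) (φ φ' : ℝ → Euc n) : Prop :=
  (∀ θ ∈ Icc (-h) (0:ℝ), HasDerivWithinAt φ (φ' θ) (Icc (-h) 0) θ) ∧
    ContinuousOn φ' (Icc (-h) 0)

/-- The norm of `W = C¹([-h,0];ℝⁿ)`:
`|φ|_W = max_{θ∈[-h,0]} ‖φ(θ)‖ + max_{θ∈[-h,0]} ‖φ'(θ)‖`. -/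
def Wnorm (n : ℕ) (h : ℝ) (φ φ' : ℝ → Euc n) : ℝ :=
  (⨆ θ : Icc (-h) (0:ℝ), ‖φ θ.1‖) + ⨆ θ : Icc (-h) (0:ℝ), ‖φ' θ.1‖

/-- A mild solution of `ü + k u̇ + A u + F(u) + M(u_t) = 0` on `[0,T)` with initial
datum `(φ, φ')`: `u` is `C¹` on `[-h,T)` with derivative `u'`, coincides with `φ` on
`[-h,0]`, and `u̇(t) = φ'(0) - ∫₀ᵗ (k u̇(s) + A u(s) + F(u(s)) + M(u_s)) ds` on `[0,T)`.
Here `M` takes the segment `u_s` as a pair (the function and its derivative). -/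
def IsMildSolOn (n : ℕ) (h k T : ℝ) (A : Euc n →L[ℝ] Euc n) (F : Euc n → Euc n)
    (M : (ℝ → Euc n) → (ℝ → Euc n) → Euc n) (φ φ' u u' : ℝ → Euc n) : Prop :=
  (∀ t ∈ Ico (-h) T, HasDerivWithinAt u (u' t) (Ico (-h) T) t) ∧
  ContinuousOn u' (Ico (-h) T) ∧
  (∀ θ ∈ Icc (-h) (0:ℝ), u θ = φ θ ∧ u' θ = φ' θ) ∧
  (∀ t ∈ Ico (0:ℝ) T, u' t = φ' 0 - ∫ s in (0:ℝ)..t,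
      (k • u' s + A (u s) + F (u s) + M (fun θ => u (s + θ)) (fun θ => u' (s + θ))))

/-- A global mild solution (on `[0,∞)`). -/
def IsGlobalMildSol (n : ℕ) (h k : ℝ) (A : Euc n →L[ℝ] Euc n) (F : Euc n → Euc n)
    (M : (ℝ → Euc n) → (ℝ → Euc n) → Euc n) (φ φ' u u' : ℝ → Euc n) : Prop :=
  (∀ t ∈ Ici (-h), HasDerivWithinAt u (u' t) (Ici (-h)) t) ∧
  ContinuousOn u' (Ici (-h)) ∧
  (∀ θ ∈ Icc (-h) (0:ℝ), u θ = φ θ ∧ u' θ = φ' θ) ∧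
  (∀ t ∈ Ici (0:ℝ), u' t = φ' 0 - ∫ s in (0:ℝ)..t,
      (k • u' s + A (u s) + F (u s) + M (fun θ => u (s + θ)) (fun θ => u' (s + θ))))

/-- Hypothesis (M1): local Lipschitz property of the delay term in the `W`-norm. -/
def HypM1 (n : ℕ) (h : ℝ) (M : (ℝ → Euc n) → (ℝ → Euc n) → Euc n) : Prop :=
  ∀ ρ > (0:ℝ), ∃ C > (0:ℝ), ∀ φ₁ φ₁' φ₂ φ₂' : ℝ → Euc n,
    IsC1Pair n h φ₁ φ₁' → IsC1Pair n h φ₂ φ₂' →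
    Wnorm n h φ₁ φ₁' ≤ ρ → Wnorm n h φ₂ φ₂' ≤ ρ →
    ‖M φ₁ φ₁' - M φ₂ φ₂'‖ ≤ C * Wnorm n h (φ₁ - φ₂) (φ₁' - φ₂')


/-!
Along a mild solution the integrand `k u̇ + A u + F(u) + M(u_s)` is continuous in `s` — for the
delay term this is (M1) combined with the uniform continuity of `u` and `u̇` on compacts — so
`u̇` is differentiable on `(0, ∞)` with `ü = -(k u̇ + A u + F(u) + M(u_s))`. Differentiating
`𝓔 = ½(‖u̇‖² + ⟨Au,u⟩) + Π(u)` along the solution, the symmetry of `A` and `∇Π = F - F*` leave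
`d𝓔/ds = -k‖u̇‖² - ⟨F*(u), u̇⟩ - ⟨M(u_s), u̇⟩`, and the fundamental theorem of calculus gives the
energy equality.
-/

open Filter Topology

section Energy

variable {E : Type*} [NormedAddCommGroup E] [InnerProductSpace ℝ E]

def energy (A : E →L[ℝ] E) (Pot : E → ℝ) (x v : E) : ℝ :=
  (1/2) * (‖v‖^2 + ⟪A x, x⟫) + Pot x

theorem ContinuousOn.energy {A : E →L[ℝ] E} {Pot : E → ℝ} (hPot : Continuous Pot)
    {x v : ℝ → E} {s : Set ℝ} (hx : ContinuousOn x s) (hv : ContinuousOn v s) :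
    ContinuousOn (fun τ => energy A Pot (x τ) (v τ)) s := by
  unfold _root_.energy
  fun_prop

theorem hasDerivAt_energy [CompleteSpace E] {A : E →L[ℝ] E} (hA : (A : E →ₗ[ℝ] E).IsSymmetric)
    {Pot : E → ℝ} {x v : ℝ → E} {g a : E} {s : ℝ} (hPot : HasGradientAt Pot g (x s))
    (hx : HasDerivAt x (v s) s) (hv : HasDerivAt v a s) :
    HasDerivAt (fun τ => energy A Pot (x τ) (v τ)) (⟪v s, a⟫ + ⟪A (x s) + g, v s⟫) s := by
  have hAx : HasDerivAt (fun τ => A (x τ)) (A (v s)) s := A.hasFDerivAt.comp_hasDerivAt s hx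
  have hPx : HasDerivAt (fun τ => Pot (x τ)) ⟪g, v s⟫ s := by
    simpa only [Function.comp_def, InnerProductSpace.toDual_apply_apply] using
      hPot.hasFDerivAt.comp_hasDerivAt s hx
  refine (((hv.norm_sq.add (hAx.inner ℝ hx)).const_mul (1/2 : ℝ)).add hPx).congr_deriv ?_
  have hAsymm : ⟪A (v s), x s⟫ = ⟪A (x s), v s⟫ := (hA (v s) (x s)).trans (real_inner_comm _ _)
  rw [inner_add_left, hAsymm]
  ring

end Energy

theorem hasDerivAt_integral_of_continuousOn_Ici {E : Type*} [NormedAddCommGroup E]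
    [NormedSpace ℝ E] [CompleteSpace E] {g : ℝ → E} {a s : ℝ} (hg : ContinuousOn g (Ici a))
    (hs : a < s) : HasDerivAt (fun τ => ∫ x in a..τ, g x) (g s) s :=
  intervalIntegral.integral_hasDerivAt_right
    ((hg.mono Icc_subset_Ici_self).intervalIntegrable_of_Icc hs.le)
    (hg.mono Ioi_subset_Ici_self |>.stronglyMeasurableAtFilter isOpen_Ioi s hs)
    (hg.continuousAt (Ici_mem_nhds hs))

theorem ContinuousOn.eventually_dist_shift_lt {X : Type*} [PseudoMetricSpace X] {f : ℝ → X}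
    {h s₀ ε : ℝ} (hf : ContinuousOn f (Ici (-h))) (hs₀ : 0 ≤ s₀) (hε : 0 < ε) :
    ∀ᶠ s in 𝓝[Ici 0] s₀, ∀ θ ∈ Icc (-h) 0, dist (f (s + θ)) (f (s₀ + θ)) < ε := by
  obtain ⟨δ, hδ, hfδ⟩ := Metric.uniformContinuousOn_iff.1
    (isCompact_Icc.uniformContinuousOn_of_continuous
      (hf.mono (Icc_subset_Ici_self : Icc (-h) (s₀ + 1) ⊆ _))) ε hε
  filter_upwards [self_mem_nhdsWithin, nhdsWithin_le_nhds (Metric.ball_mem_nhds s₀ hδ),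
    nhdsWithin_le_nhds (eventually_lt_nhds (lt_add_one s₀))]
    with s (hs : 0 ≤ s) (hsδ : dist s s₀ < δ) (hs1 : s < s₀ + 1) θ hθ
  exact hfδ _ ⟨by linarith [hθ.1], by linarith [hθ.2]⟩ _ ⟨by linarith [hθ.1], by linarith [hθ.2]⟩
    (by rwa [dist_add_right])

theorem Wnorm_le_add_of_forall_le {n : ℕ} {h a b : ℝ} {φ φ' : ℝ → Euc n} (hh : 0 ≤ h)
    (hφ : ∀ θ ∈ Icc (-h) 0, ‖φ θ‖ ≤ a) (hφ' : ∀ θ ∈ Icc (-h) 0, ‖φ' θ‖ ≤ b) :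
    Wnorm n h φ φ' ≤ a + b := by
  have : Nonempty (Icc (-h) (0:ℝ)) := ⟨⟨0, by linarith, le_rfl⟩⟩
  exact add_le_add (ciSup_le fun θ => hφ θ θ.2) (ciSup_le fun θ => hφ' θ θ.2)

namespace IsGlobalMildSol

variable {n : ℕ} {h k : ℝ} {A : Euc n →L[ℝ] Euc n} {F : Euc n → Euc n}
  {M : (ℝ → Euc n) → (ℝ → Euc n) → Euc n} {φ φ' u u' : ℝ → Euc n}

theorem continuousOn (hu : IsGlobalMildSol n h k A F M φ φ' u u') : ContinuousOn u (Ici (-h)) :=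
  fun s hs => (hu.1 s hs).continuousWithinAt

theorem continuousOn_deriv (hu : IsGlobalMildSol n h k A F M φ φ' u u') :
    ContinuousOn u' (Ici (-h)) :=
  hu.2.1

theorem hasDerivAt (hu : IsGlobalMildSol n h k A F M φ φ' u u') {s : ℝ} (hs : -h < s) :
    HasDerivAt u (u' s) s :=
  (hu.1 s hs.le).hasDerivAt (Ici_mem_nhds hs)

theorem isC1Pair_segment (hu : IsGlobalMildSol n h k A F M φ φ' u u') {s : ℝ} (hs : 0 ≤ s) :
    IsC1Pair n h (fun θ => u (s + θ)) (fun θ => u' (s + θ)) := by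
  have hmaps : MapsTo (fun θ : ℝ => s + θ) (Icc (-h) 0) (Ici (-h)) :=
    fun θ hθ => show -h ≤ s + θ by linarith [hθ.1]
  refine ⟨fun θ hθ => ?_, hu.continuousOn_deriv.comp (by fun_prop) hmaps⟩
  simpa [Function.comp_def] using (hu.1 _ (hmaps hθ)).scomp_of_eq θ
    ((hasDerivAt_id θ).const_add s).hasDerivWithinAt hmaps rfl

theorem continuousOn_delay (hu : IsGlobalMildSol n h k A F M φ φ' u u') (hh : 0 ≤ h)
    (hM : HypM1 n h M) :
    ContinuousOn (fun s => M (fun θ => u (s + θ)) (fun θ => u' (s + θ))) (Ici 0) := by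
  intro s₀ (hs₀ : 0 ≤ s₀)
  have hK : Icc (-h) (s₀ + 1) ⊆ Ici (-h) := Icc_subset_Ici_self
  obtain ⟨B, hB⟩ := isCompact_Icc.exists_bound_of_continuousOn (hu.continuousOn.mono hK)
  obtain ⟨B', hB'⟩ := isCompact_Icc.exists_bound_of_continuousOn (hu.continuousOn_deriv.mono hK)
  obtain ⟨C, hC, hMlip⟩ := hM (|B| + |B'| + 1) (by positivity)
  have hsegment_le : ∀ s, 0 ≤ s → s ≤ s₀ + 1 →
      Wnorm n h (fun θ => u (s + θ)) (fun θ => u' (s + θ)) ≤ |B| + |B'| + 1 := by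
    intro s hs hs1
    have hmem : ∀ θ ∈ Icc (-h) (0:ℝ), s + θ ∈ Icc (-h) (s₀ + 1) :=
      fun θ hθ => ⟨by linarith [hθ.1], by linarith [hθ.2]⟩
    refine (Wnorm_le_add_of_forall_le hh (fun θ hθ => hB _ (hmem θ hθ))
      (fun θ hθ => hB' _ (hmem θ hθ))).trans ?_
    linarith [le_abs_self B, le_abs_self B']
  rw [ContinuousWithinAt, Metric.tendsto_nhds]
  intro ε hε
  have hε' : 0 < ε / (4 * C) := by positivity
  have hnear : ∀ᶠ s in 𝓝[Ici 0] s₀, s ≤ s₀ + 1 :=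
    nhdsWithin_le_nhds (eventually_le_nhds (by linarith))
  filter_upwards [self_mem_nhdsWithin, hnear, hu.continuousOn.eventually_dist_shift_lt hs₀ hε',
    hu.continuousOn_deriv.eventually_dist_shift_lt hs₀ hε'] with s (hs : 0 ≤ s) hs1 hclose hclose'
  have hdiff : Wnorm n h ((fun θ => u (s + θ)) - fun θ => u (s₀ + θ))
      ((fun θ => u' (s + θ)) - fun θ => u' (s₀ + θ)) ≤ ε / (4 * C) + ε / (4 * C) :=
    Wnorm_le_add_of_forall_le hh
      (fun θ hθ => by simpa only [Pi.sub_apply, dist_eq_norm] using (hclose θ hθ).le)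
      (fun θ hθ => by simpa only [Pi.sub_apply, dist_eq_norm] using (hclose' θ hθ).le)
  rw [dist_eq_norm]
  calc _ ≤ C * Wnorm n h ((fun θ => u (s + θ)) - fun θ => u (s₀ + θ))
          ((fun θ => u' (s + θ)) - fun θ => u' (s₀ + θ)) :=
        hMlip _ _ _ _ (hu.isC1Pair_segment hs) (hu.isC1Pair_segment hs₀)
          (hsegment_le s hs hs1) (hsegment_le s₀ hs₀ (by linarith))
    _ ≤ C * (ε / (4 * C) + ε / (4 * C)) := by gcongr
    _ < ε := by field_simp; linarith

theorem hasDerivAt_deriv (hu : IsGlobalMildSol n h k A F M φ φ' u u') (hh : 0 ≤ h)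
    (hF : Continuous F) (hM : HypM1 n h M) {s : ℝ} (hs : 0 < s) :
    HasDerivAt u' (-(k • u' s + A (u s) + F (u s) +
      M (fun θ => u (s + θ)) (fun θ => u' (s + θ)))) s := by
  have hsub : Ici (0:ℝ) ⊆ Ici (-h) := Ici_subset_Ici.2 (by linarith)
  have hforce : ContinuousOn (fun s => k • u' s + A (u s) + F (u s) +
      M (fun θ => u (s + θ)) (fun θ => u' (s + θ))) (Ici 0) :=
    (((hu.continuousOn_deriv.mono hsub).const_smul k).add
      (A.continuous.comp_continuousOn (hu.continuousOn.mono hsub))).add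
      (hF.comp_continuousOn (hu.continuousOn.mono hsub)) |>.add (hu.continuousOn_delay hh hM)
  have hprimitive := (hasDerivAt_integral_of_continuousOn_Ici hforce hs).const_sub (φ' 0)
  refine hprimitive.congr_of_eventuallyEq ?_
  filter_upwards [Ioi_mem_nhds hs] with τ hτ using hu.2.2.2 τ (Ioi_subset_Ici_self hτ)

theorem hasDerivAt_energy (hu : IsGlobalMildSol n h k A F M φ φ' u u') (hh : 0 ≤ h)
    (hA : (A : Euc n →ₗ[ℝ] Euc n).IsSymmetric) (hF : Continuous F) (hM : HypM1 n h M)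
    {Pot : Euc n → ℝ} {Fstar : Euc n → Euc n} (hgrad : ∀ x, HasGradientAt Pot (F x - Fstar x) x)
    {s : ℝ} (hs : 0 < s) :
    HasDerivAt (fun τ => energy A Pot (u τ) (u' τ))
      (-(k * ‖u' s‖^2 + ⟪Fstar (u s), u' s⟫ +
        ⟪M (fun θ => u (s + θ)) (fun θ => u' (s + θ)), u' s⟫)) s := by
  refine (_root_.hasDerivAt_energy hA (hgrad (u s)) (hu.hasDerivAt (by linarith))
    (hu.hasDerivAt_deriv hh hF hM hs)).congr_deriv ?_
  simp only [inner_neg_right, inner_add_right, inner_sub_right,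
    real_inner_smul_right, real_inner_self_eq_norm_sq, real_inner_comm (u' s)]
  ring

end IsGlobalMildSol

theorem energy_equality_general
    (n : ℕ) (h k : ℝ) (hh : 0 < h)
    (A : Euc n →L[ℝ] Euc n)
    (hA_symm : ∀ x y : Euc n, ⟪A x, y⟫ = ⟪x, A y⟫)
    (F : Euc n → Euc n) (hF1 : LocallyLipschitz F)
    (M : (ℝ → Euc n) → (ℝ → Euc n) → Euc n)
    (hM1 : HypM1 n h M)
    -- Hypothesis (F2)
    (Pot Pot0 Pot1 : Euc n → ℝ) (Fstar : Euc n → Euc n)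
    (hF_grad : ∀ x : Euc n, HasGradientAt Pot (F x - Fstar x) x)
    (L_Fstar : NNReal) (hFstar_lip : LipschitzWith L_Fstar Fstar)
    (hPot_split : ∀ x, Pot x = Pot0 x + Pot1 x)
    (φ φ' : ℝ → Euc n)
    (u u' : ℝ → Euc n) (hu : IsGlobalMildSol n h k A F M φ φ' u u')
    -- the energy functionals
    (E calE : Euc n → Euc n → ℝ)
    (hE : ∀ x v : Euc n, E x v = (1/2) * (‖v‖^2 + ⟪A x, x⟫) + Pot0 x)
    (hcalE : ∀ x v : Euc n, calE x v = E x v + Pot1 x) :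
    ∀ t ∈ Ici (0:ℝ),
      calE (u t) (u' t) + k * ∫ s in (0:ℝ)..t, ‖u' s‖^2
        = calE (φ 0) (φ' 0)
          - (∫ s in (0:ℝ)..t, ⟪Fstar (u s), u' s⟫)
          - ∫ s in (0:ℝ)..t, ⟪M (fun θ => u (s + θ)) (fun θ => u' (s + θ)), u' s⟫ := by
  intro t (ht : 0 ≤ t)
  have hcalE_eq : ∀ x v, calE x v = energy A Pot x v := fun x v => by
    rw [hcalE, hE, energy, hPot_split]; ring
  have hPot : Continuous Pot :=
    continuous_iff_continuousAt.2 fun x => (hF_grad x).differentiableAt.continuousAt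
  have hsub : Ici (0:ℝ) ⊆ Ici (-h) := Ici_subset_Ici.2 (by linarith)
  have hu_cont := hu.continuousOn.mono hsub
  have hu'_cont := hu.continuousOn_deriv.mono hsub
  have hint : ∀ g : ℝ → ℝ, ContinuousOn g (Ici 0) → IntervalIntegrable g volume 0 t :=
    fun g hg => (hg.mono Icc_subset_Ici_self).intervalIntegrable_of_Icc ht
  have hkin : IntervalIntegrable (fun s => ‖u' s‖^2) volume 0 t := hint _ (hu'_cont.norm.pow 2)
  have hstar : IntervalIntegrable (fun s => ⟪Fstar (u s), u' s⟫) volume 0 t :=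
    hint _ ((hFstar_lip.continuous.comp_continuousOn hu_cont).inner hu'_cont)
  have hdelay := hint _ ((hu.continuousOn_delay hh.le hM1).inner hu'_cont)
  have hbalance := intervalIntegral.integral_eq_sub_of_hasDerivAt_of_le ht
    ((ContinuousOn.energy hPot hu_cont hu'_cont).mono Icc_subset_Ici_self)
    (fun s hs => hu.hasDerivAt_energy hh.le hA_symm hF1.continuous hM1 hF_grad hs.1)
    (((hkin.const_mul k).add hstar).add hdelay).neg
  rw [intervalIntegral.integral_neg, intervalIntegral.integral_add ((hkin.const_mul k).add hstar)
    hdelay, intervalIntegral.integral_add (hkin.const_mul k) hstar,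
    intervalIntegral.integral_const_mul] at hbalance
  obtain ⟨hu0, hu'0⟩ := hu.2.2.1 0 ⟨by linarith, le_rfl⟩
  rw [hcalE_eq, hcalE_eq, ← hu0, ← hu'0]
  linarith

/-- Energy equality for global mild solutions. -/
theorem energy_equality
    (n : ℕ) (hn : 1 ≤ n) (h k : ℝ) (hh : 0 < h) (hk : 0 < k)
    (A : Euc n →L[ℝ] Euc n)
    (hA_symm : ∀ x y : Euc n, ⟪A x, y⟫ = ⟪x, A y⟫)
    (hA_pos : ∀ x : Euc n, x ≠ 0 → 0 < ⟪A x, x⟫)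
    (F : Euc n → Euc n) (hF1 : LocallyLipschitz F)
    (M : (ℝ → Euc n) → (ℝ → Euc n) → Euc n)
    (hM1 : HypM1 n h M)
    -- Hypothesis (F2)
    (Pot Pot0 Pot1 : Euc n → ℝ) (Fstar : Euc n → Euc n)
    (hPot_smooth : ContDiff ℝ 1 Pot)
    (hF_grad : ∀ x : Euc n, HasGradientAt Pot (F x - Fstar x) x)
    (L_Fstar : NNReal) (hFstar_lip : LipschitzWith L_Fstar Fstar)
    (hPot_split : ∀ x, Pot x = Pot0 x + Pot1 x)
    (hPot0_nonneg : ∀ x, 0 ≤ Pot0 x)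
    (hPot1_bound : ∀ η > (0:ℝ), ∃ C > (0:ℝ), ∀ x : Euc n,
      |Pot1 x| ≤ η * (⟪A x, x⟫ + Pot0 x) + C)
    -- Hypothesis (M2)
    (M₀ M₁ : ℝ) (hM₀ : 0 ≤ M₀) (hM₁ : 0 ≤ M₁)
    (hM2 : ∀ φ φ' : ℝ → Euc n, IsC1Pair n h φ φ' →
      ‖M φ φ'‖ ≤ M₀ + M₁ * ((⨆ θ : Icc (-h) (0:ℝ), Real.sqrt ⟪A (φ θ.1), φ θ.1⟫) +
        ⨆ θ : Icc (-h) (0:ℝ), ‖φ' θ.1‖))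
    (φ φ' : ℝ → Euc n) (hφ : IsC1Pair n h φ φ')
    (u u' : ℝ → Euc n) (hu : IsGlobalMildSol n h k A F M φ φ' u u')
    -- the energy functionals
    (E calE : Euc n → Euc n → ℝ)
    (hE : ∀ x v : Euc n, E x v = (1/2) * (‖v‖^2 + ⟪A x, x⟫) + Pot0 x)
    (hcalE : ∀ x v : Euc n, calE x v = E x v + Pot1 x) :
    ∀ t ∈ Ici (0:ℝ),
      calE (u t) (u' t) + k * ∫ s in (0:ℝ)..t, ‖u' s‖^2
        = calE (φ 0) (φ' 0)
          - (∫ s in (0:ℝ)..t, ⟪Fstar (u s), u' s⟫)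
          - ∫ s in (0:ℝ)..t, ⟪M (fun θ => u (s + θ)) (fun θ => u' (s + θ)), u' s⟫ :=
  energy_equality_general n h k hh A hA_symm F hF1 M hM1 Pot Pot0 Pot1 Fstar hF_grad L_Fstar
    hFstar_lip hPot_split φ φ' u u' hu E calE hE hcalE
end
end

section
/- There exist constants M ≥ 1 and λ > 0 such that for all t ≥ 0 the operator norm satisfies ‖exp(−t𝒜)‖ ≤ M e^{−λ t}; in other words, the semigroup generated by −𝒜 on ℝⁿ × ℝⁿ is exponentially stable. -/
/-! Lyapunov argument. Coercivity of `A` (a positive form on a compact sphere has a positive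
minimum) makes `E(u, v) = ⟪A u, u⟫ + ‖v‖² + 2ε⟪u, v⟫` comparable to `‖(u, v)‖²` for small `ε`.
Along the flow the damping only dissipates `k‖v‖²`; the cross term `2ε⟪u, v⟫` contributes
`-2ε⟪A u, u⟫`, so that `E` itself decays: `dE/dt ≤ -(ε/2) E`. Hence `E` decays like `e^{-εt/2}`
and the norm of the orbit like `e^{-εt/4}`. -/

open Set Real MeasureTheory
open scoped RealInnerProductSpace

noncomputable section

theorem isCoercive_of_apply_self_pos {E : Type*} [NormedAddCommGroup E] [NormedSpace ℝ E]
    [FiniteDimensional ℝ E] (B : E →L[ℝ] E →L[ℝ] ℝ) (hB : ∀ x ≠ 0, 0 < B x x) :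
    IsCoercive B := by
  rcases subsingleton_or_nontrivial E with _ | _
  · exact ⟨1, one_pos, fun u => by simp [Subsingleton.elim u 0]⟩
  obtain ⟨w, hw, hmin⟩ := (isCompact_sphere (0 : E) 1).exists_isMinOn
    (NormedSpace.sphere_nonempty.2 zero_le_one)
    (by fun_prop : Continuous fun x => B x x).continuousOn
  refine ⟨B w w, hB w (ne_zero_of_mem_unit_sphere ⟨w, hw⟩), fun u => ?_⟩
  rcases eq_or_ne u 0 with rfl | hu
  · simp
  have hu' : 0 < ‖u‖ := norm_pos_iff.2 hu
  have hmem : ‖u‖⁻¹ • u ∈ Metric.sphere (0 : E) 1 := by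
    simp [norm_smul, hu'.ne']
  have hle := hmin hmem
  simp only [mem_ofPred_eq, map_smul, smul_apply, smul_eq_mul] at hle
  calc B w w * ‖u‖ * ‖u‖ ≤ (‖u‖⁻¹ * (‖u‖⁻¹ * B u u)) * ‖u‖ * ‖u‖ := by gcongr
    _ = B u u := by field_simp

section LyapunovStability

variable {E : Type*} [NormedAddCommGroup E] [NormedSpace ℝ E] [CompleteSpace E]

theorem hasDerivAt_exp_neg_smul_apply (T : E →L[ℝ] E) (p : E) (t : ℝ) :
    HasDerivAt (fun s : ℝ => NormedSpace.exp (-(s • T)) p)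
      (-T (NormedSpace.exp (-(t • T)) p)) t := by
  simpa [← neg_smul] using
    (hasDerivAt_exp_smul_const' (𝕂 := ℝ) (-T) t).clm_apply (hasDerivAt_const t p)

theorem bilin_exp_neg_smul_apply_le (T : E →L[ℝ] E) (B : E →L[ℝ] E →L[ℝ] ℝ) {c : ℝ}
    (hT : ∀ p, c * B p p ≤ B (T p) p + B p (T p)) (p : E) {t : ℝ} (ht : 0 ≤ t) :
    B (NormedSpace.exp (-(t • T)) p) (NormedSpace.exp (-(t • T)) p) ≤
      Real.exp (-c * t) * B p p := by
  set x : ℝ → E := fun s => NormedSpace.exp (-(s • T)) p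
  have hg : ∀ s, HasDerivAt (fun s => Real.exp (c * s) * B (x s) (x s))
      (Real.exp (c * s) * (c * B (x s) (x s) - (B (T (x s)) (x s) + B (x s) (T (x s))))) s := by
    intro s
    have hx := hasDerivAt_exp_neg_smul_apply T p s
    refine (((hasDerivAt_id' s).const_mul c).exp.fun_mul
      (B.hasDerivAt_of_bilinear (fun _ => hx) (fun _ => hx))).congr_deriv ?_
    simp only [map_neg, neg_apply, x]
    ring
  have hanti : Antitone fun s => Real.exp (c * s) * B (x s) (x s) := by
    refine antitone_of_deriv_nonpos (fun s => (hg s).differentiableAt) fun s => ?_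
    rw [(hg s).deriv]
    exact mul_nonpos_of_nonneg_of_nonpos (Real.exp_pos _).le (by linarith [hT (x s)])
  have h0 : x 0 = p := by simp [x]
  have hmono := hanti ht
  simp only [mul_zero, Real.exp_zero, one_mul, h0] at hmono
  calc B (x t) (x t) = Real.exp (-c * t) * (Real.exp (c * t) * B (x t) (x t)) := by
        rw [← mul_assoc, ← Real.exp_add]; simp
    _ ≤ Real.exp (-c * t) * B p p := by gcongr

theorem exists_norm_exp_neg_smul_le_of_isCoercive (T : E →L[ℝ] E) {B : E →L[ℝ] E →L[ℝ] ℝ}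
    (hB : IsCoercive B) {c : ℝ} (hc : 0 < c) (hT : ∀ p, c * B p p ≤ B (T p) p + B p (T p)) :
    ∃ M : ℝ, 1 ≤ M ∧ ∃ lam > (0 : ℝ), ∀ t : ℝ, 0 ≤ t →
      ‖NormedSpace.exp (-(t • T))‖ ≤ M * Real.exp (-lam * t) := by
  obtain ⟨C, hC, hBC⟩ := hB
  refine ⟨max 1 (‖B‖ / C), le_max_left _ _, c / 2, half_pos hc, fun t ht => ?_⟩
  refine ContinuousLinearMap.opNorm_le_bound _ (by positivity) fun p => ?_
  set M := max 1 (‖B‖ / C)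
  set x := NormedSpace.exp (-(t • T)) p
  have hBp : B p p ≤ ‖B‖ * ‖p‖ * ‖p‖ := (le_abs_self _).trans (B.le_opNorm₂ p p)
  have hM : ‖B‖ / C ≤ M ^ 2 := by
    nlinarith [le_max_left 1 (‖B‖ / C), le_max_right 1 (‖B‖ / C)]
  have hexp : Real.exp (-c * t) = Real.exp (-(c / 2) * t) ^ 2 := by
    rw [← Real.exp_nat_mul]; ring_nf
  have hsq : ‖x‖ ^ 2 ≤ (M * Real.exp (-(c / 2) * t) * ‖p‖) ^ 2 :=
    calc ‖x‖ ^ 2 ≤ B x x / C := by rw [le_div_iff₀ hC]; nlinarith [hBC x]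
      _ ≤ Real.exp (-c * t) * (‖B‖ * ‖p‖ * ‖p‖) / C := by
          gcongr
          exact (bilin_exp_neg_smul_apply_le T B hT p ht).trans (by gcongr)
      _ = ‖B‖ / C * (Real.exp (-(c / 2) * t) * ‖p‖) ^ 2 := by rw [hexp]; ring
      _ ≤ (M * Real.exp (-(c / 2) * t) * ‖p‖) ^ 2 := by rw [mul_assoc M, mul_pow M]; gcongr
  exact (pow_le_pow_iff_left₀ (norm_nonneg _) (by positivity) two_ne_zero).1 hsq

end LyapunovStability

theorem Prod.norm_sq_le_add {E F : Type*} [SeminormedAddCommGroup E] [SeminormedAddCommGroup F]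
    (p : E × F) : ‖p‖ ^ 2 ≤ ‖p.1‖ ^ 2 + ‖p.2‖ ^ 2 := by
  rw [Prod.norm_def]
  rcases max_cases ‖p.1‖ ‖p.2‖ with ⟨h, -⟩ | ⟨h, -⟩ <;> rw [h]
  · exact le_add_of_nonneg_right (sq_nonneg _)
  · exact le_add_of_nonneg_left (sq_nonneg _)

section DampedOscillator

variable {E : Type*} [NormedAddCommGroup E] [InnerProductSpace ℝ E] (A : E →L[ℝ] E) (ε : ℝ)

open ContinuousLinearMap in
def dampedEnergyForm : (E × E) →L[ℝ] (E × E) →L[ℝ] ℝ :=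
  (innerSL ℝ).bilinearComp (A.comp (fst ℝ E E)) (fst ℝ E E)
    + (innerSL ℝ).bilinearComp (snd ℝ E E) (snd ℝ E E)
    + ε • ((innerSL ℝ).bilinearComp (fst ℝ E E) (snd ℝ E E)
      + (innerSL ℝ).bilinearComp (snd ℝ E E) (fst ℝ E E))

@[simp]
theorem dampedEnergyForm_apply (p q : E × E) :
    dampedEnergyForm A ε p q = ⟪A p.1, q.1⟫ + ⟪p.2, q.2⟫ + ε * (⟪p.1, q.2⟫ + ⟪p.2, q.1⟫) := by
  simp [dampedEnergyForm, mul_add]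

theorem abs_two_mul_inner_le {a : ℝ} (hε : 0 ≤ ε) (hεa : ε ≤ a / 2) (hε1 : ε ≤ 1 / 2) (u v : E) :
    |2 * ε * ⟪u, v⟫| ≤ a / 2 * ‖u‖ ^ 2 + 1 / 2 * ‖v‖ ^ 2 := by
  have hP : |⟪u, v⟫| ≤ ‖u‖ * ‖v‖ := abs_real_inner_le_norm u v
  have hUV : 2 * ‖u‖ * ‖v‖ ≤ ‖u‖ ^ 2 + ‖v‖ ^ 2 := two_mul_le_add_sq _ _
  calc |2 * ε * ⟪u, v⟫| = ε * (2 * |⟪u, v⟫|) := by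
        rw [abs_mul, abs_of_nonneg (by positivity)]; ring
    _ ≤ ε * (‖u‖ ^ 2 + ‖v‖ ^ 2) := by gcongr; linarith
    _ ≤ a / 2 * ‖u‖ ^ 2 + 1 / 2 * ‖v‖ ^ 2 := by nlinarith [sq_nonneg ‖u‖, sq_nonneg ‖v‖]

theorem isCoercive_dampedEnergyForm {a : ℝ} (ha : 0 < a) (hA : ∀ u, a * ‖u‖ * ‖u‖ ≤ ⟪A u, u⟫)
    (hε : 0 ≤ ε) (hεa : ε ≤ a / 2) (hε1 : ε ≤ 1 / 2) : IsCoercive (dampedEnergyForm A ε) := by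
  refine ⟨min a 1 / 2, by positivity, fun p => ?_⟩
  have hcross := abs_two_mul_inner_le ε hε hεa hε1 p.1 p.2
  have hp := p.norm_sq_le_add
  have hmin : min a 1 / 2 * (‖p.1‖ ^ 2 + ‖p.2‖ ^ 2) ≤ a / 2 * ‖p.1‖ ^ 2 + 1 / 2 * ‖p.2‖ ^ 2 := by
    have := min_le_left a 1; have := min_le_right a 1
    nlinarith [sq_nonneg ‖p.1‖, sq_nonneg ‖p.2‖]
  rw [dampedEnergyForm_apply, real_inner_comm p.1 p.2, real_inner_self_eq_norm_sq]
  nlinarith [hA p.1, abs_le.1 hcross,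
    mul_le_mul_of_nonneg_left hp (by positivity : 0 ≤ min a 1 / 2)]

theorem dampedEnergyForm_dissipation (hA_symm : ∀ x y, ⟪A x, y⟫ = ⟪x, A y⟫) {k : ℝ}
    (T : E × E →L[ℝ] E × E) (hT : ∀ p, T p = (-p.2, A p.1 + k • p.2)) {a : ℝ} (ha : 0 < a)
    (hA : ∀ u, a * ‖u‖ * ‖u‖ ≤ ⟪A u, u⟫) (hε : 0 < ε) (hεa : ε ≤ a / 2) (hε1 : ε ≤ 1 / 2)
    (hεk : ε * (2 + k ^ 2 / a) ≤ k) (p : E × E) :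
    ε / 2 * dampedEnergyForm A ε p p ≤
      dampedEnergyForm A ε (T p) p + dampedEnergyForm A ε p (T p) := by
  obtain ⟨u, v⟩ := p
  have hAuv : ⟪A v, u⟫ = ⟪A u, v⟫ := by rw [hA_symm, real_inner_comm]
  simp only [hT, dampedEnergyForm_apply, map_neg, inner_neg_left, inner_neg_right,
    inner_add_left, inner_add_right, real_inner_smul_left, real_inner_smul_right, hAuv,
    real_inner_comm (A u) u, real_inner_comm (A u) v, real_inner_comm u v,
    real_inner_self_eq_norm_sq]
  have hQ : a * ‖u‖ ^ 2 ≤ ⟪A u, u⟫ := by rw [sq, ← mul_assoc]; exact hA u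
  have hcross := abs_le.1 (abs_two_mul_inner_le ε hε.le hεa hε1 u v)
  have hamgm : 2 * k * (‖u‖ * ‖v‖) ≤ a * ‖u‖ ^ 2 + k ^ 2 / a * ‖v‖ ^ 2 := by
    have hsq : a * ‖u‖ ^ 2 + k ^ 2 / a * ‖v‖ ^ 2 - 2 * k * (‖u‖ * ‖v‖) =
        (a * ‖u‖ - k * ‖v‖) ^ 2 / a := by
      field_simp; ring
    linarith [hsq ▸ div_nonneg (sq_nonneg (a * ‖u‖ - k * ‖v‖)) ha.le]
  have hεk' : ε ≤ k := by nlinarith [div_nonneg (sq_nonneg k) ha.le]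
  have hkP : -(⟪A u, u⟫ + k ^ 2 / a * ‖v‖ ^ 2) ≤ 2 * k * ⟪u, v⟫ := by
    nlinarith [neg_le_of_abs_le (abs_real_inner_le_norm u v), hε.trans_le hεk']
  nlinarith [mul_le_mul_of_nonneg_left hkP hε.le, mul_le_mul_of_nonneg_right hεk (sq_nonneg ‖v‖),
    mul_le_mul_of_nonneg_left hcross.2 hε.le, mul_le_mul_of_nonneg_left hQ hε.le,
    mul_le_mul_of_nonneg_right hεk' (sq_nonneg ‖v‖)]

end DampedOscillator

theorem semigroup_exponentially_stable_general
    (n : ℕ) (k : ℝ) (hk : 0 < k)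
    (A : Euc n →L[ℝ] Euc n)
    (hA_symm : ∀ x y : Euc n, ⟪A x, y⟫ = ⟪x, A y⟫)
    (hA_pos : ∀ x : Euc n, x ≠ 0 → 0 < ⟪A x, x⟫)
    (𝓐 : (Euc n × Euc n) →L[ℝ] (Euc n × Euc n))
    (h𝓐 : ∀ p : Euc n × Euc n, 𝓐 p = (-p.2, A p.1 + k • p.2)) :
    ∃ M : ℝ, 1 ≤ M ∧ ∃ lam > (0:ℝ), ∀ t : ℝ, 0 ≤ t →
      ‖NormedSpace.exp (-(t • 𝓐))‖ ≤ M * Real.exp (-lam * t) := by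
  obtain ⟨a, ha, hA⟩ := isCoercive_of_apply_self_pos ((innerSL ℝ).comp A) (by simpa using hA_pos)
  replace hA : ∀ u, a * ‖u‖ * ‖u‖ ≤ ⟪A u, u⟫ := by simpa using hA
  obtain ⟨ε, hε, hεa, hε1, hεk⟩ :
      ∃ ε : ℝ, 0 < ε ∧ ε ≤ a / 2 ∧ ε ≤ 1 / 2 ∧ ε * (2 + k ^ 2 / a) ≤ k :=
    ⟨min (min (a / 2) (1 / 2)) (k / (2 + k ^ 2 / a)), by positivity,
      (min_le_left _ _).trans (min_le_left _ _), (min_le_left _ _).trans (min_le_right _ _),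
      (le_div_iff₀ (by positivity)).1 (min_le_right _ _)⟩
  exact exists_norm_exp_neg_smul_le_of_isCoercive 𝓐
    (isCoercive_dampedEnergyForm A ε ha hA hε.le hεa hε1) (half_pos hε)
    (dampedEnergyForm_dissipation A ε hA_symm 𝓐 h𝓐 ha hA hε hεa hε1 hεk)

/-- The semigroup `exp(-t𝒜)` generated by `-𝒜`, where
`𝒜(u,v) = (-v, Au + kv)` on `ℝⁿ × ℝⁿ`, is exponentially stable. -/
theorem semigroup_exponentially_stable
    (n : ℕ) (hn : 1 ≤ n) (k : ℝ) (hk : 0 < k)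
    (A : Euc n →L[ℝ] Euc n)
    (hA_symm : ∀ x y : Euc n, ⟪A x, y⟫ = ⟪x, A y⟫)
    (hA_pos : ∀ x : Euc n, x ≠ 0 → 0 < ⟪A x, x⟫)
    (𝓐 : (Euc n × Euc n) →L[ℝ] (Euc n × Euc n))
    (h𝓐 : ∀ p : Euc n × Euc n, 𝓐 p = (-p.2, A p.1 + k • p.2)) :
    ∃ M : ℝ, 1 ≤ M ∧ ∃ lam > (0:ℝ), ∀ t : ℝ, 0 ≤ t →
      ‖NormedSpace.exp (-(t • 𝓐))‖ ≤ M * Real.exp (-lam * t) :=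
  semigroup_exponentially_stable_general n k hk A hA_symm hA_pos 𝓐 h𝓐
end
end

section
/- One has the local Lipschitz estimate ‖G(φ¹(−τ₁)) − G(φ²(−τ₂))‖ ≤ (1 + ρ C_ρ) L_G d, where d = max_{θ∈[−h,0]} ‖φ¹(θ) − φ²(θ)‖ + max_{θ∈[−h,0]} ‖(φ¹)'(θ) − (φ²)'(θ)‖. -/
open Set Real

/-!
Split `φ₁(-τ₁) - φ₂(-τ₂)` at `φ₁(-τ₂)`: moving the delay costs at most `ρ |τ₁ - τ₂| ≤ ρ C_ρ d` by
the mean value inequality, since `‖φ₁'‖ ≤ ρ`, and changing the history costs at most `d`.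
-/

section SupNorm

variable {E : Type*} [NormedAddCommGroup E]

theorem norm_le_iSup_norm_of_isCompact {α : Type*} [TopologicalSpace α] {s : Set α}
    (hs : IsCompact s) {f : α → E} (hf : ContinuousOn f s) {x : α} (hx : x ∈ s) : ‖f x‖ ≤ ⨆ y : s, ‖f y.1‖ := by
  have hbdd := (hs.image_of_continuousOn hf.norm).bddAbove
  rw [← range_domRestrict] at hbdd
  exact le_ciSup hbdd ⟨x, hx⟩

theorem norm_sub_le_mul_abs_of_iSup_norm_deriv_le [NormedSpace ℝ E] {a b ρ : ℝ}
    {φ φ' : ℝ → E} (hφ : ∀ θ ∈ Icc a b, HasDerivWithinAt φ (φ' θ) (Icc a b) θ)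
    (hφ' : ContinuousOn φ' (Icc a b)) (hbd : ⨆ θ : Icc a b, ‖φ' θ.1‖ ≤ ρ)
    {x y : ℝ} (hx : x ∈ Icc a b) (hy : y ∈ Icc a b) : ‖φ x - φ y‖ ≤ ρ * |x - y| := by
  have hderiv : ∀ θ ∈ Icc a b, ‖φ' θ‖ ≤ ρ := fun θ hθ =>
    (norm_le_iSup_norm_of_isCompact isCompact_Icc hφ' hθ).trans hbd
  simpa only [Real.norm_eq_abs] using
    (convex_Icc a b).norm_image_sub_le_of_norm_hasDerivWithin_le hφ hderiv hy hx

end SupNorm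

theorem sdd_term_local_lipschitz_general
    (H : Type*) [NormedAddCommGroup H] [InnerProductSpace ℝ H]
    (G : H → H) (L_G : ℝ) (hLG : 0 ≤ L_G)
    (hG : ∀ x y : H, ‖G x - G y‖ ≤ L_G * ‖x - y‖)
    (h ρ C_ρ : ℝ)
    (φ₁ φ₁' φ₂ φ₂' : ℝ → H)
    (hφ₁ : ∀ θ ∈ Icc (-h) (0:ℝ), HasDerivWithinAt φ₁ (φ₁' θ) (Icc (-h) 0) θ)
    (hφ₁c : ContinuousOn φ₁' (Icc (-h) 0))
    (hφ₂ : ∀ θ ∈ Icc (-h) (0:ℝ), HasDerivWithinAt φ₂ (φ₂' θ) (Icc (-h) 0) θ)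
    (hbd₁ : (⨆ θ : Icc (-h) (0:ℝ), ‖φ₁ θ.1‖) + (⨆ θ : Icc (-h) (0:ℝ), ‖φ₁' θ.1‖) ≤ ρ)
    (τ₁ τ₂ : ℝ) (hτ₁ : τ₁ ∈ Icc (0:ℝ) h) (hτ₂ : τ₂ ∈ Icc (0:ℝ) h)
    (d : ℝ)
    (hd : d = (⨆ θ : Icc (-h) (0:ℝ), ‖φ₁ θ.1 - φ₂ θ.1‖)
        + ⨆ θ : Icc (-h) (0:ℝ), ‖φ₁' θ.1 - φ₂' θ.1‖)
    (hττ : |τ₁ - τ₂| ≤ C_ρ * d) :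
    ‖G (φ₁ (-τ₁)) - G (φ₂ (-τ₂))‖ ≤ (1 + ρ * C_ρ) * L_G * d := by
  have hmem₁ : -τ₁ ∈ Icc (-h) (0:ℝ) := ⟨neg_le_neg hτ₁.2, neg_nonpos.2 hτ₁.1⟩
  have hmem₂ : -τ₂ ∈ Icc (-h) (0:ℝ) := ⟨neg_le_neg hτ₂.2, neg_nonpos.2 hτ₂.1⟩
  have hderiv_bd : ⨆ θ : Icc (-h) (0:ℝ), ‖φ₁' θ.1‖ ≤ ρ := by
    linarith [Real.iSup_nonneg fun θ : Icc (-h) (0:ℝ) => norm_nonneg (φ₁ θ.1)]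
  have hρ : 0 ≤ ρ := (norm_nonneg _).trans <|
    (norm_le_iSup_norm_of_isCompact isCompact_Icc hφ₁c hmem₁).trans hderiv_bd
  have hshift : ‖φ₁ (-τ₁) - φ₁ (-τ₂)‖ ≤ ρ * |τ₁ - τ₂| := by
    simpa only [neg_sub_neg, abs_sub_comm] using
      norm_sub_le_mul_abs_of_iSup_norm_deriv_le hφ₁ hφ₁c hderiv_bd hmem₁ hmem₂
  have hgap : ‖φ₁ (-τ₂) - φ₂ (-τ₂)‖ ≤ d := by
    have hcont : ContinuousOn (fun θ => φ₁ θ - φ₂ θ) (Icc (-h) 0) :=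
      fun θ hθ => ((hφ₁ θ hθ).continuousWithinAt).sub (hφ₂ θ hθ).continuousWithinAt
    rw [hd]
    linarith [norm_le_iSup_norm_of_isCompact isCompact_Icc hcont hmem₂,
      Real.iSup_nonneg fun θ : Icc (-h) (0:ℝ) => norm_nonneg (φ₁' θ.1 - φ₂' θ.1)]
  calc ‖G (φ₁ (-τ₁)) - G (φ₂ (-τ₂))‖
      ≤ L_G * ‖φ₁ (-τ₁) - φ₂ (-τ₂)‖ := hG _ _
    _ ≤ L_G * (ρ * |τ₁ - τ₂| + d) := by
        gcongr
        exact (norm_sub_le_norm_sub_add_norm_sub _ (φ₁ (-τ₂)) _).trans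
          (add_le_add hshift hgap)
    _ ≤ L_G * (ρ * (C_ρ * d) + d) := by gcongr
    _ = (1 + ρ * C_ρ) * L_G * d := by ring

/-- local Lipschitz estimate for the discrete state-dependent delay term. -/
theorem sdd_term_local_lipschitz
    (H : Type*) [NormedAddCommGroup H] [InnerProductSpace ℝ H] [CompleteSpace H]
    (G : H → H) (L_G : ℝ) (hLG : 0 ≤ L_G)
    (hG : ∀ x y : H, ‖G x - G y‖ ≤ L_G * ‖x - y‖)
    (h ρ C_ρ : ℝ) (hh : 0 < h) (hρ : 0 < ρ) (hC : 0 < C_ρ)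
    (φ₁ φ₁' φ₂ φ₂' : ℝ → H)
    (hφ₁ : ∀ θ ∈ Icc (-h) (0:ℝ), HasDerivWithinAt φ₁ (φ₁' θ) (Icc (-h) 0) θ)
    (hφ₁c : ContinuousOn φ₁' (Icc (-h) 0))
    (hφ₂ : ∀ θ ∈ Icc (-h) (0:ℝ), HasDerivWithinAt φ₂ (φ₂' θ) (Icc (-h) 0) θ)
    (hφ₂c : ContinuousOn φ₂' (Icc (-h) 0))
    (hbd₁ : (⨆ θ : Icc (-h) (0:ℝ), ‖φ₁ θ.1‖) + (⨆ θ : Icc (-h) (0:ℝ), ‖φ₁' θ.1‖) ≤ ρ)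
    (hbd₂ : (⨆ θ : Icc (-h) (0:ℝ), ‖φ₂ θ.1‖) + (⨆ θ : Icc (-h) (0:ℝ), ‖φ₂' θ.1‖) ≤ ρ)
    (τ₁ τ₂ : ℝ) (hτ₁ : τ₁ ∈ Icc (0:ℝ) h) (hτ₂ : τ₂ ∈ Icc (0:ℝ) h)
    (d : ℝ)
    (hd : d = (⨆ θ : Icc (-h) (0:ℝ), ‖φ₁ θ.1 - φ₂ θ.1‖)
        + ⨆ θ : Icc (-h) (0:ℝ), ‖φ₁' θ.1 - φ₂' θ.1‖)
    (hττ : |τ₁ - τ₂| ≤ C_ρ * d) :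
    ‖G (φ₁ (-τ₁)) - G (φ₂ (-τ₂))‖ ≤ (1 + ρ * C_ρ) * L_G * d :=
  sdd_term_local_lipschitz_general H G L_G hLG hG h ρ C_ρ φ₁ φ₁' φ₂ φ₂' hφ₁ hφ₁c hφ₂ hbd₁ τ₁ τ₂ hτ₁
    hτ₂ d hd hττ
end

section
/- Suppose the initial datum φ ∈ W is twice continuously differentiable on [-h,0] and let u be the global mild solution with initial datum φ. Then u̇ is continuously differentiable on [-h,∞) (so that u is a C² solution satisfying ü(t) + k u̇(t) + A u(t) + F(u(t)) + M(u_t) = 0 pointwise for all t ≥ 0) if and only if the compatibility condition φ''(0) + k φ'(0) + A φ(0) + F(φ(0)) + M(φ) = 0 holds. -/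
/-!
On `[0,∞)` the mild formulation says `u̇(t) = φ'(0) - ∫₀ᵗ G`, where
`G(s) = k u̇(s) + A u(s) + F(u(s)) + M(u_s)`. By (M1) and the uniform continuity of `u` and `u̇`
on compact intervals, `s ↦ M(u_s)` and hence `G` is continuous, so `u̇` is right-differentiable
on `[0,∞)` with derivative `-G`, while on `[-h,0]` it is `φ'` with derivative `φ''`. The two
pieces glue to a continuous derivative on `[-h,∞)` exactly when `φ''(0) = -G(0)`, and
`G(0) = k φ'(0) + A φ(0) + F(φ(0)) + M(φ)` because (M1) forces `M(u_0) = M(φ)`.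
-/

open Set Real MeasureTheory
open scoped RealInnerProductSpace

noncomputable section

open Filter Topology

section Gluing

variable {E : Type*} [NormedAddCommGroup E] [NormedSpace ℝ E]

theorem hasDerivWithinAt_union_of_isClosed {f f' : ℝ → E} {s t : Set ℝ}
    (hs : IsClosed s) (ht : IsClosed t)
    (hfs : ∀ x ∈ s, HasDerivWithinAt f (f' x) s x) (hft : ∀ x ∈ t, HasDerivWithinAt f (f' x) t x)
    {x : ℝ} (hx : x ∈ s ∪ t) : HasDerivWithinAt f (f' x) (s ∪ t) x := by
  by_cases hxs : x ∈ s <;> by_cases hxt : x ∈ t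
  · exact (hfs x hxs).union (hft x hxt)
  · exact (hfs x hxs).union (HasFDerivWithinAt.of_notMem_closure (by rwa [ht.closure_eq]))
  · exact (HasFDerivWithinAt.of_notMem_closure (by rwa [hs.closure_eq])).union (hft x hxt)
  · exact absurd hx (by simp [hxs, hxt])

theorem exists_hasDerivWithinAt_Ici_of_Icc_of_Ici {f f₁ f₂ : ℝ → E} {a b : ℝ} (hab : a ≤ b)
    (hf₁ : ∀ t ∈ Icc a b, HasDerivWithinAt f (f₁ t) (Icc a b) t) (hc₁ : ContinuousOn f₁ (Icc a b))
    (hf₂ : ∀ t ∈ Ici b, HasDerivWithinAt f (f₂ t) (Ici b) t) (hc₂ : ContinuousOn f₂ (Ici b))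
    (hb : f₁ b = f₂ b) :
    ∃ f' : ℝ → E, (∀ t ∈ Ici a, HasDerivWithinAt f (f' t) (Ici a) t) ∧
      ContinuousOn f' (Ici a) ∧ EqOn f' f₂ (Ici b) := by
  classical
  set f' := (Iio b).piecewise f₁ f₂
  have h₁ : EqOn f' f₁ (Icc a b) := fun t ht => by
    rcases ht.2.lt_or_eq with htb | rfl
    · exact piecewise_eq_of_mem _ _ _ htb
    · exact (piecewise_eq_of_notMem _ _ _ (lt_irrefl t)).trans hb.symm
  have h₂ : EqOn f' f₂ (Ici b) := fun t ht =>
    piecewise_eq_of_notMem _ _ _ (not_lt.mpr (mem_Ici.mp ht))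
  rw [← Icc_union_Ici_eq_Ici hab]
  exact ⟨f', fun t ht => hasDerivWithinAt_union_of_isClosed isClosed_Icc isClosed_Ici
      (fun x hx => (hf₁ x hx).congr_deriv (h₁ hx).symm)
      (fun x hx => (hf₂ x hx).congr_deriv (h₂ hx).symm) ht,
    (hc₁.congr h₁).union_of_isClosed (hc₂.congr h₂) isClosed_Icc isClosed_Ici, h₂⟩

theorem hasDerivWithinAt_Ici_of_eq_sub_integral [CompleteSpace E] {f G : ℝ → E} {c : E} {a : ℝ}
    (hG : ContinuousOn G (Ici a)) (hf : ∀ t ∈ Ici a, f t = c - ∫ s in a..t, G s) :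
    ∀ t ∈ Ici a, HasDerivWithinAt f (-G t) (Ici a) t := by
  intro t ht
  have hGext : Continuous fun s => G (max s a) :=
    hG.comp_continuous (continuous_id.max continuous_const) fun s => le_max_right s a
  have hf' : ∀ t ∈ Ici a, f t = c - ∫ s in a..t, G (max s a) := fun t ht => by
    rw [hf t ht, intervalIntegral.integral_congr fun s hs => ?_]
    rw [uIcc_of_le ht] at hs
    simp only [max_eq_left hs.1]
  have hderiv := ((hasDerivAt_const t c).sub (hGext.integral_hasStrictDerivAt a t).hasDerivAt)
  rw [zero_sub, max_eq_left ht] at hderiv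
  exact hderiv.hasDerivWithinAt.congr hf' (hf' t ht)

end Gluing

section Segments

variable {E : Type*} [NormedAddCommGroup E] {h : ℝ}

theorem tendsto_iSup_norm_shift_sub {g : ℝ → E} (hg : ContinuousOn g (Ici (-h))) {t : ℝ}
    (ht : 0 ≤ t) :
    Tendsto (fun s => ⨆ θ : Icc (-h) (0:ℝ), ‖g (s + θ) - g (t + θ)‖) (𝓝[Ici 0] t) (𝓝 0) := by
  rw [Metric.tendsto_nhdsWithin_nhds]
  intro ε hε
  obtain ⟨δ, hδ, hgδ⟩ := Metric.uniformContinuousOn_iff.mp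
    (isCompact_Icc.uniformContinuousOn_of_continuous
      (hg.mono (Icc_subset_Ici_self : Icc (-h) (t + 1) ⊆ _))) (ε / 2) (half_pos hε)
  refine ⟨min δ 1, lt_min hδ one_pos, fun s hs hst => ?_⟩
  rw [Real.dist_eq, lt_min_iff, abs_lt, abs_lt] at hst
  have hsup : (⨆ θ : Icc (-h) (0:ℝ), ‖g (s + θ) - g (t + θ)‖) ≤ ε / 2 := by
    refine Real.iSup_le (fun ⟨θ, hθ₁, hθ₂⟩ => ?_) (half_pos hε).le
    rw [← dist_eq_norm]
    refine (hgδ (s + θ) ⟨?_, ?_⟩ (t + θ) ⟨?_, ?_⟩ ?_).le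
    · linarith [mem_Ici.mp hs]
    · linarith
    · linarith
    · linarith
    · rw [Real.dist_eq, add_sub_add_right_eq_sub, abs_lt]
      exact hst.1
  rw [Real.dist_eq, sub_zero, abs_of_nonneg (Real.iSup_nonneg fun _ => norm_nonneg _)]
  linarith

end Segments

section DelayTerm

variable {n : ℕ} {h : ℝ}

theorem Wnorm_le_add {φ φ' : ℝ → Euc n} {a b : ℝ} (ha : 0 ≤ a) (hb : 0 ≤ b)
    (hφ : ∀ θ ∈ Icc (-h) (0:ℝ), ‖φ θ‖ ≤ a) (hφ' : ∀ θ ∈ Icc (-h) (0:ℝ), ‖φ' θ‖ ≤ b) :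
    Wnorm n h φ φ' ≤ a + b :=
  add_le_add (Real.iSup_le (fun θ => hφ θ θ.2) ha) (Real.iSup_le (fun θ => hφ' θ θ.2) hb)

theorem isC1Pair_shift {u u' : ℝ → Euc n}
    (hu : ∀ t ∈ Ici (-h), HasDerivWithinAt u (u' t) (Ici (-h)) t)
    (hu' : ContinuousOn u' (Ici (-h))) {s : ℝ} (hs : 0 ≤ s) :
    IsC1Pair n h (fun θ => u (s + θ)) (fun θ => u' (s + θ)) := by
  have hmaps : MapsTo (s + ·) (Icc (-h) (0:ℝ)) (Ici (-h)) := fun θ hθ => by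
    simp only [mem_Ici]; linarith [hθ.1]
  refine ⟨fun θ hθ => ?_, hu'.comp (continuous_const_add s).continuousOn hmaps⟩
  have hshift := (hu (s + θ) (hmaps hθ)).scomp θ
    ((hasDerivAt_id θ).const_add s).hasDerivWithinAt hmaps
  rwa [one_smul] at hshift

theorem exists_Wnorm_shift_le {u u' : ℝ → Euc n} (hu : ContinuousOn u (Ici (-h)))
    (hu' : ContinuousOn u' (Ici (-h))) (T : ℝ) :
    ∃ ρ > 0, ∀ s ∈ Icc 0 T, Wnorm n h (fun θ => u (s + θ)) (fun θ => u' (s + θ)) ≤ ρ := by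
  obtain ⟨B, hB⟩ := isCompact_Icc.exists_bound_of_continuousOn (hu.mono
    (Icc_subset_Ici_self : Icc (-h) T ⊆ _))
  obtain ⟨B', hB'⟩ := isCompact_Icc.exists_bound_of_continuousOn (hu'.mono
    (Icc_subset_Ici_self : Icc (-h) T ⊆ _))
  have hmem : ∀ s ∈ Icc 0 T, ∀ θ ∈ Icc (-h) (0:ℝ), s + θ ∈ Icc (-h) T := fun s hs θ hθ =>
    ⟨by linarith [hs.1, hθ.1], by linarith [hs.2, hθ.2]⟩
  refine ⟨max B 0 + max B' 0 + 1, by positivity, fun s hs => ?_⟩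
  calc Wnorm n h (fun θ => u (s + θ)) (fun θ => u' (s + θ)) ≤ max B 0 + max B' 0 :=
        Wnorm_le_add (le_max_right _ _) (le_max_right _ _)
          (fun θ hθ => (hB _ (hmem s hs θ hθ)).trans (le_max_left _ _))
          (fun θ hθ => (hB' _ (hmem s hs θ hθ)).trans (le_max_left _ _))
    _ ≤ max B 0 + max B' 0 + 1 := le_add_of_nonneg_right zero_le_one

variable {M : (ℝ → Euc n) → (ℝ → Euc n) → Euc n}

theorem HypM1.apply_eq_of_eqOn (hM : HypM1 n h M) {φ₁ φ₁' φ₂ φ₂' : ℝ → Euc n}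
    (h₁ : IsC1Pair n h φ₁ φ₁') (h₂ : IsC1Pair n h φ₂ φ₂')
    (hφ : EqOn φ₁ φ₂ (Icc (-h) 0)) (hφ' : EqOn φ₁' φ₂' (Icc (-h) 0)) :
    M φ₁ φ₁' = M φ₂ φ₂' := by
  set W₁ := Wnorm n h φ₁ φ₁'
  set W₂ := Wnorm n h φ₂ φ₂'
  obtain ⟨C, hC, hLip⟩ := hM (|W₁| + |W₂| + 1) (by positivity)
  have hW : Wnorm n h (φ₁ - φ₂) (φ₁' - φ₂') ≤ 0 + 0 :=
    Wnorm_le_add le_rfl le_rfl (fun θ hθ => by simp [hφ hθ]) (fun θ hθ => by simp [hφ' hθ])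
  have hM_le := hLip _ _ _ _ h₁ h₂ (by linarith [le_abs_self W₁, abs_nonneg W₂])
    (by linarith [le_abs_self W₂, abs_nonneg W₁])
  have : ‖M φ₁ φ₁' - M φ₂ φ₂'‖ ≤ 0 := hM_le.trans (by nlinarith)
  exact sub_eq_zero.mp (norm_le_zero_iff.mp this)

theorem HypM1.continuousOn_shift (hM : HypM1 n h M) {u u' : ℝ → Euc n}
    (hu : ∀ t ∈ Ici (-h), HasDerivWithinAt u (u' t) (Ici (-h)) t)
    (hu' : ContinuousOn u' (Ici (-h))) :
    ContinuousOn (fun s => M (fun θ => u (s + θ)) (fun θ => u' (s + θ))) (Ici 0) := by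
  intro t ht
  have hucont : ContinuousOn u (Ici (-h)) := fun t ht => (hu t ht).continuousWithinAt
  obtain ⟨ρ, hρ, hbound⟩ := exists_Wnorm_shift_le hucont hu' (t + 1)
  obtain ⟨C, -, hLip⟩ := hM ρ hρ
  have hnear : ∀ᶠ s in 𝓝[Ici 0] t, s ∈ Icc 0 (t + 1) :=
    inter_mem self_mem_nhdsWithin (nhdsWithin_le_nhds (Iic_mem_nhds (lt_add_one t)))
  have hdiff : Tendsto (fun s => Wnorm n h ((fun θ => u (s + θ)) - fun θ => u (t + θ))
      ((fun θ => u' (s + θ)) - fun θ => u' (t + θ))) (𝓝[Ici 0] t) (𝓝 0) := by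
    simpa [Wnorm] using
      (tendsto_iSup_norm_shift_sub hucont ht).add (tendsto_iSup_norm_shift_sub hu' ht)
  rw [ContinuousWithinAt, ← tendsto_sub_nhds_zero_iff]
  refine squeeze_zero_norm' ?_ (by simpa using hdiff.const_mul C)
  filter_upwards [hnear] with s hs
  exact hLip _ _ _ _ (isC1Pair_shift hu hu' hs.1) (isC1Pair_shift hu hu' ht)
    (hbound s hs) (hbound t ⟨ht, by linarith [mem_Ici.mp ht]⟩)

end DelayTerm

section MildSolution

variable {n : ℕ} {h k : ℝ} {A : Euc n →L[ℝ] Euc n} {F : Euc n → Euc n}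
  {M : (ℝ → Euc n) → (ℝ → Euc n) → Euc n} {φ φ' u u' : ℝ → Euc n}

def delayRhs (k : ℝ) (A : Euc n →L[ℝ] Euc n) (F : Euc n → Euc n)
    (M : (ℝ → Euc n) → (ℝ → Euc n) → Euc n) (u u' : ℝ → Euc n) (s : ℝ) : Euc n :=
  k • u' s + A (u s) + F (u s) + M (fun θ => u (s + θ)) (fun θ => u' (s + θ))

theorem IsGlobalMildSol.continuousOn_delayRhs (hu : IsGlobalMildSol n h k A F M φ φ' u u')
    (hh : 0 ≤ h) (hF : Continuous F) (hM : HypM1 n h M) :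
    ContinuousOn (delayRhs k A F M u u') (Ici 0) := by
  obtain ⟨hud, huc, -, -⟩ := hu
  have hsub : Ici (0:ℝ) ⊆ Ici (-h) := Ici_subset_Ici.mpr (by linarith)
  have hucont : ContinuousOn u (Ici 0) := fun t ht =>
    (hud t (hsub ht)).continuousWithinAt.mono hsub
  exact ((((huc.mono hsub).const_smul k).add (A.continuous.comp_continuousOn hucont)).add
    (hF.comp_continuousOn hucont)).add (hM.continuousOn_shift hud huc)

theorem IsGlobalMildSol.hasDerivWithinAt_delayRhs (hu : IsGlobalMildSol n h k A F M φ φ' u u')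
    (hh : 0 ≤ h) (hF : Continuous F) (hM : HypM1 n h M) :
    ∀ t ∈ Ici 0, HasDerivWithinAt u' (-delayRhs k A F M u u' t) (Ici 0) t :=
  hasDerivWithinAt_Ici_of_eq_sub_integral (hu.continuousOn_delayRhs hh hF hM) hu.2.2.2

theorem IsGlobalMildSol.delayRhs_zero (hu : IsGlobalMildSol n h k A F M φ φ' u u')
    (hh : 0 ≤ h) (hM : HypM1 n h M) (hφ : IsC1Pair n h φ φ') :
    delayRhs k A F M u u' 0 = k • φ' 0 + A (φ 0) + F (φ 0) + M φ φ' := by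
  obtain ⟨hud, huc, hinit, -⟩ := hu
  have h0 : (0:ℝ) ∈ Icc (-h) 0 := ⟨by linarith, le_rfl⟩
  have hM0 : M (fun θ => u (0 + θ)) (fun θ => u' (0 + θ)) = M φ φ' :=
    hM.apply_eq_of_eqOn (isC1Pair_shift hud huc le_rfl) hφ
      (fun θ hθ => by simpa using (hinit θ hθ).1) (fun θ hθ => by simpa using (hinit θ hθ).2)
  simp only [delayRhs, (hinit 0 h0).1, (hinit 0 h0).2, hM0]

theorem IsGlobalMildSol.hasDerivWithinAt_Icc (hu : IsGlobalMildSol n h k A F M φ φ' u u')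
    {φ'' : ℝ → Euc n} (hφ' : ∀ θ ∈ Icc (-h) (0:ℝ), HasDerivWithinAt φ' (φ'' θ) (Icc (-h) 0) θ) :
    ∀ t ∈ Icc (-h) (0:ℝ), HasDerivWithinAt u' (φ'' t) (Icc (-h) 0) t := fun t ht =>
  (hφ' t ht).congr (fun x hx => (hu.2.2.1 x hx).2) (hu.2.2.1 t ht).2

end MildSolution

theorem c2_smoothness_iff_compatibility_general
    (n : ℕ) (h k : ℝ) (hh : 0 < h)
    (A : Euc n →L[ℝ] Euc n)
    (F : Euc n → Euc n) (hF1 : LocallyLipschitz F)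
    (M : (ℝ → Euc n) → (ℝ → Euc n) → Euc n)
    (hM1 : HypM1 n h M)
    (φ φ' φ'' : ℝ → Euc n) (hφ : IsC1Pair n h φ φ')
    -- `φ` is twice continuously differentiable on `[-h,0]`
    (hφ' : ∀ θ ∈ Icc (-h) (0:ℝ), HasDerivWithinAt φ' (φ'' θ) (Icc (-h) 0) θ)
    (hφ'' : ContinuousOn φ'' (Icc (-h) 0))
    (u u' : ℝ → Euc n) (hu : IsGlobalMildSol n h k A F M φ φ' u u') :
    (∃ u'' : ℝ → Euc n,
        (∀ t ∈ Ici (-h), HasDerivWithinAt u' (u'' t) (Ici (-h)) t) ∧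
        ContinuousOn u'' (Ici (-h)) ∧
        ∀ t ∈ Ici (0:ℝ), u'' t + k • u' t + A (u t) + F (u t)
            + M (fun θ => u (t + θ)) (fun θ => u' (t + θ)) = 0)
      ↔ φ'' 0 + k • φ' 0 + A (φ 0) + F (φ 0) + M φ φ' = 0 := by
  have h0 : (0:ℝ) ∈ Icc (-h) 0 := ⟨by linarith, le_rfl⟩
  have hu'φ := hu.hasDerivWithinAt_Icc hφ'
  have hG0 := hu.delayRhs_zero hh.le hM1 hφ
  have hsum : ∀ (v : Euc n) (t : ℝ), v + k • u' t + A (u t) + F (u t)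
      + M (fun θ => u (t + θ)) (fun θ => u' (t + θ)) = v + delayRhs k A F M u u' t :=
    fun v t => by simp only [delayRhs, add_assoc]
  constructor
  · rintro ⟨u'', hd, -, heq⟩
    have hu''0 : u'' 0 = φ'' 0 := (uniqueDiffOn_Icc (by linarith) 0 h0).eq_deriv _
      ((hd 0 h0.1).mono fun x hx => hx.1) (hu'φ 0 h0)
    have heq0 := heq 0 self_mem_Ici
    rw [hsum, hG0, hu''0] at heq0
    rw [← heq0]
    abel
  · intro hcompat
    have hφ''0 : φ'' 0 = -delayRhs k A F M u u' 0 :=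
      eq_neg_of_add_eq_zero_left (by rw [hG0, ← hcompat]; abel)
    obtain ⟨w, hw, hwc, hwG⟩ := exists_hasDerivWithinAt_Ici_of_Icc_of_Ici (by linarith) hu'φ hφ''
      (hu.hasDerivWithinAt_delayRhs hh.le hF1.continuous hM1)
      (hu.continuousOn_delayRhs hh.le hF1.continuous hM1).neg hφ''0
    exact ⟨w, hw, hwc, fun t ht => by rw [hsum, hwG ht, neg_add_cancel]⟩

/-- a global mild solution with `C²` initial datum is a classical `C²`
solution if and only if the compatibility condition
`φ''(0) + k φ'(0) + A φ(0) + F(φ(0)) + M(φ) = 0` holds. -/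
theorem c2_smoothness_iff_compatibility
    (n : ℕ) (hn : 1 ≤ n) (h k : ℝ) (hh : 0 < h) (hk : 0 < k)
    (A : Euc n →L[ℝ] Euc n)
    (hA_symm : ∀ x y : Euc n, ⟪A x, y⟫ = ⟪x, A y⟫)
    (hA_pos : ∀ x : Euc n, x ≠ 0 → 0 < ⟪A x, x⟫)
    (F : Euc n → Euc n) (hF1 : LocallyLipschitz F)
    (M : (ℝ → Euc n) → (ℝ → Euc n) → Euc n)
    (hM1 : HypM1 n h M)
    -- Hypothesis (F2)
    (Pot Pot0 Pot1 : Euc n → ℝ) (Fstar : Euc n → Euc n)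
    (hPot_smooth : ContDiff ℝ 1 Pot)
    (hF_grad : ∀ x : Euc n, HasGradientAt Pot (F x - Fstar x) x)
    (L_Fstar : NNReal) (hFstar_lip : LipschitzWith L_Fstar Fstar)
    (hPot_split : ∀ x, Pot x = Pot0 x + Pot1 x)
    (hPot0_nonneg : ∀ x, 0 ≤ Pot0 x)
    (hPot1_bound : ∀ η > (0:ℝ), ∃ C > (0:ℝ), ∀ x : Euc n,
      |Pot1 x| ≤ η * (⟪A x, x⟫ + Pot0 x) + C)
    -- Hypothesis (M2)
    (M₀ M₁ : ℝ) (hM₀ : 0 ≤ M₀) (hM₁ : 0 ≤ M₁)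
    (hM2 : ∀ φ φ' : ℝ → Euc n, IsC1Pair n h φ φ' →
      ‖M φ φ'‖ ≤ M₀ + M₁ * ((⨆ θ : Icc (-h) (0:ℝ), Real.sqrt ⟪A (φ θ.1), φ θ.1⟫) +
        ⨆ θ : Icc (-h) (0:ℝ), ‖φ' θ.1‖))
    (φ φ' φ'' : ℝ → Euc n) (hφ : IsC1Pair n h φ φ')
    -- `φ` is twice continuously differentiable on `[-h,0]`
    (hφ' : ∀ θ ∈ Icc (-h) (0:ℝ), HasDerivWithinAt φ' (φ'' θ) (Icc (-h) 0) θ)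
    (hφ'' : ContinuousOn φ'' (Icc (-h) 0))
    (u u' : ℝ → Euc n) (hu : IsGlobalMildSol n h k A F M φ φ' u u') :
    (∃ u'' : ℝ → Euc n,
        (∀ t ∈ Ici (-h), HasDerivWithinAt u' (u'' t) (Ici (-h)) t) ∧
        ContinuousOn u'' (Ici (-h)) ∧
        ∀ t ∈ Ici (0:ℝ), u'' t + k • u' t + A (u t) + F (u t)
            + M (fun θ => u (t + θ)) (fun θ => u' (t + θ)) = 0)
      ↔ φ'' 0 + k • φ' 0 + A (φ 0) + F (φ 0) + M φ φ' = 0 :=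
  c2_smoothness_iff_compatibility_general n h k hh A F hF1 M hM1 φ φ' φ'' hφ hφ' hφ'' u u' hu
end
end
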